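/- Let m ≥ 3 and let L satisfy 2^{L+1} - 1 ≤ m ≤ 2^{L+2} - 2. In the directed graph G on ℤ/mℤ with edges j → 2j+1 mod m and j → 2j+2 mod m, for every k with 1 ≤ k ≤ L+1 and every vertex v with 2^k - 1 ≤ v ≤ min(2^{k+1} - 2, m - 1), there is a walk of length exactly k from vertex 0 to vertex v. -/

import Mathlib

/-!
Vertices are heap indices: the children of `j` are `2j+1` and `2j+2`, so the level-`k` band
`[2^k - 1, 2^(k+1) - 2]` is the set of depth-`k` nodes of the infinite binary heap. Walking down
from the root `0` through the ancestors `(v + 1) / 2^(k-i) - 1` of `v` reaches `v` in exactly `k`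
steps, and reducing mod `m` preserves edges.
-/

/-- Edge relation of the digraph on `ZMod m`: `j → 2j+1` and `j → 2j+2`. -/
def GStep (m : ℕ) (a b : ZMod m) : Prop := b = 2 * a + 1 ∨ b = 2 * a + 2

def heapParent (j : ℕ) : ℕ := (j - 1) / 2

lemma eq_two_mul_heapParent_add_one_or_two {j : ℕ} (hj : 1 ≤ j) :
    j = 2 * heapParent j + 1 ∨ j = 2 * heapParent j + 2 := by
  unfold heapParent
  omega

lemma heapParent_iterate (v d : ℕ) : heapParent^[d] v = (v + 1) / 2 ^ d - 1 := by
  induction d with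
  | zero => simp
  | succ d ih =>
    rw [Function.iterate_succ_apply', ih, heapParent, pow_succ, ← Nat.div_div_eq_div_mul]
    omega

lemma heapParent_iterate_eq_zero {v k : ℕ} (hv : v ≤ 2 ^ (k + 1) - 2) :
    heapParent^[k] v = 0 := by
  have : (v + 1) / 2 ^ k < 2 := by
    have := Nat.one_le_two_pow (n := k)
    rw [pow_succ] at hv
    rw [Nat.div_lt_iff_lt_mul (by positivity)]
    omega
  rw [heapParent_iterate]
  omega

lemma one_le_heapParent_iterate {v k d : ℕ} (hv : 2 ^ k - 1 ≤ v) (hd : d < k) :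
    1 ≤ heapParent^[d] v := by
  have hpow : 2 ^ (d + 1) ≤ 2 ^ k := Nat.pow_le_pow_right (by norm_num) hd
  have : 2 ≤ (v + 1) / 2 ^ d := by
    rw [Nat.le_div_iff_mul_le (by positivity), ← pow_succ']
    omega
  rw [heapParent_iterate]
  omega

lemma GStep.natCast {m a b : ℕ} (h : b = 2 * a + 1 ∨ b = 2 * a + 2) :
    GStep m (a : ZMod m) (b : ZMod m) := by
  rcases h with rfl | rfl
  · left; push_cast; ring
  · right; push_cast; ring

theorem reach_level_band_general
    (m L : ℕ) :
    ∀ k, 1 ≤ k → k ≤ L + 1 →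
      ∀ v : ℕ, 2 ^ k - 1 ≤ v → v ≤ min (2 ^ (k + 1) - 2) (m - 1) →
        ∃ w : ℕ → ZMod m,
          w 0 = 0 ∧ w k = (v : ZMod m) ∧
          ∀ i < k, GStep m (w i) (w (i + 1)) := by
  intro k _ _ v hv_low hv_high
  refine ⟨fun i => (heapParent^[k - i] v : ZMod m), ?_, by simp, fun i hi => ?_⟩
  · simp [heapParent_iterate_eq_zero (hv_high.trans (min_le_left _ _))]
  · obtain ⟨d, hd⟩ : ∃ d, k - i = d + 1 := ⟨k - i - 1, by omega⟩
    simp only [hd, show k - (i + 1) = d by omega, Function.iterate_succ_apply']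
    exact GStep.natCast
      (eq_two_mul_heapParent_add_one_or_two (one_le_heapParent_iterate hv_low (by omega)))

theorem reach_level_band
    (m L : ℕ) (hm : 3 ≤ m)
    (hL1 : 2 ^ (L + 1) - 1 ≤ m) (hL2 : m ≤ 2 ^ (L + 2) - 2) :
    ∀ k, 1 ≤ k → k ≤ L + 1 →
      ∀ v : ℕ, 2 ^ k - 1 ≤ v → v ≤ min (2 ^ (k + 1) - 2) (m - 1) →
        ∃ w : ℕ → ZMod m,
          w 0 = 0 ∧ w k = (v : ZMod m) ∧
          ∀ i < k, GStep m (w i) (w (i + 1)) :=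
  reach_level_band_general m L
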